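/- Let (ω_n) be an increasing sequence of algebra weights on ℝ⁺ satisfying the condition that for every n there is m with sup_t t ω_n(t)/ω_m(t) < ∞, and let μ ∈ B(ω). Then the derivation D̄_μ ν = (Xν)*μ on B(ω) equals the adjoint of the continuous operator T_μ on D(1/ω) = ⋃_n C₀(1/ω_n) defined by (T_μ h)(t) = t ∫_{ℝ⁺} h(t+s) dμ(s); that is, ∫ h d((Xν)*μ) = ∫ (T_μ h) dν for all h ∈ D(1/ω) and ν ∈ B(ω), so D̄_μ is weak-star continuous on B(ω) = D(1/ω)*. -/

import Mathlib

/-!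
Testing `(Xν) * μ` against `h ∈ C₀(1/ω_k)` amounts to integrating the bounded Borel function
`f = h / ω_k` against `ω_k · ((Xν) * μ)`. Both this and
`f ↦ ∫∫ (t / ω_m(t)) (ω_k(t+s) / ω_k(s)) f(t+s) d(ω_k μ)(s) d(ω_m ν)(t)` are additive and
continuous under bounded pointwise convergence (dominated convergence; the kernel is bounded by
submultiplicativity and `t ω_k(t) ≤ C ω_m(t)`), and they agree on indicators of bounded Borel
sets by definition of `(Xν) * μ`. So they agree on all bounded Borel functions, which is the
adjoint identity. The same two estimates show that `T_μ` maps `C₀(1/ω_k)` into `C₀(1/ω_m)`,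
so weak-star convergence of `ν` transfers to `(Xν) * μ` through the adjoint identity.
-/

open MeasureTheory Set Filter Topology

noncomputable section

/-- Integral of a complex-valued function against a complex (Borel) measure,
defined via the Jordan decompositions of the real and imaginary parts. -/
def cInt {X : Type} [MeasurableSpace X] (μ : ComplexMeasure X) (f : X → ℂ) : ℂ :=
  ((∫ x, f x ∂μ.re.toJordanDecomposition.posPart) -
      ∫ x, f x ∂μ.re.toJordanDecomposition.negPart) +
    Complex.I * ((∫ x, f x ∂μ.im.toJordanDecomposition.posPart) -
      ∫ x, f x ∂μ.im.toJordanDecomposition.negPart)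

/-- A (positive) measure playing the role of the total variation `|μ|` of a complex
measure `μ` (it is equivalent to the classical total variation: `|μ| ≤ cTV μ ≤ 2|μ|`). -/
def cTV {X : Type} [MeasurableSpace X] (μ : ComplexMeasure X) : Measure X :=
  μ.re.totalVariation + μ.im.totalVariation

/-- `μ` is concentrated on the set `A`, i.e. `μ` is a measure "on `A`". -/
def ConcOn {X : Type} [MeasurableSpace X] (μ : ComplexMeasure X) (A : Set X) : Prop :=
  ∀ E : Set X, MeasurableSet E → E ⊆ Aᶜ → μ E = 0

/-- `ρ` is the convolution `(Xν) * μ` of the complex measures `ν, μ` on `[0,1)`,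
characterized by `ρ E = ∫∫ 1_E (t+s) t dμ(s) dν(t)` for Borel `E ⊆ [0,1)`. -/
def IsXConv (μ ν ρ : ComplexMeasure ℝ) : Prop :=
  ConcOn ρ (Ico 0 1) ∧
    ∀ E : Set ℝ, MeasurableSet E → E ⊆ Ico (0 : ℝ) 1 →
      ρ E = cInt ν fun t => (t : ℂ) * cInt μ fun s => E.indicator (1 : ℝ → ℂ) (t + s)
/-- `ω` is an algebra weight on `ℝ⁺`: positive, Borel, with `ω` and `1/ω` locally
bounded, right continuous, submultiplicative and `ω 0 = 1`. -/
def IsAlgebraWeight (ω : ℝ → ℝ) : Prop :=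
  Measurable ω ∧ (∀ t ∈ Ici (0 : ℝ), 0 < ω t) ∧
    (∀ T : ℝ, ∃ C : ℝ, ∀ t ∈ Icc (0 : ℝ) T, ω t ≤ C ∧ 1 / ω t ≤ C) ∧
    (∀ t ∈ Ici (0 : ℝ), ContinuousWithinAt ω (Ici t) t) ∧
    (∀ s ∈ Ici (0 : ℝ), ∀ t ∈ Ici (0 : ℝ), ω (s + t) ≤ ω s * ω t) ∧
    ω 0 = 1

/-- `(ω n)` is an increasing sequence of algebra weights on `ℝ⁺`. -/
def IsWeightSeq (ω : ℕ → ℝ → ℝ) : Prop :=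
  (∀ n, IsAlgebraWeight (ω n)) ∧ ∀ n, ∀ t ∈ Ici (0 : ℝ), ω n t ≤ ω (n + 1) t

/-- `σ` encodes an element `μ ∈ B(ω) = ⋂ₙ M(ωₙ)`: the `n`-th component is the finite
complex measure `ωₙ · μ`, so that `∫ f dμ = ∫ f/ωₙ d(σ n)`; the components are linked by
`σ n = (ωₙ/ω_{n+1}) · σ (n+1)` (tested against bounded measurable functions), and each
is concentrated on `ℝ⁺`. In particular `‖μ‖_{ωₙ} = ‖σ n‖ = |σ n|(ℝ⁺)`. -/
def MemBW (ω : ℕ → ℝ → ℝ) (σ : ℕ → ComplexMeasure ℝ) : Prop :=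
  (∀ n, ConcOn (σ n) (Ici 0)) ∧
    ∀ (n : ℕ) (f : ℝ → ℂ), Measurable f → (∃ C : ℝ, ∀ t, ‖f t‖ ≤ C) →
      cInt (σ n) f = cInt (σ (n + 1)) fun t => ((ω n t / ω (n + 1) t : ℝ) : ℂ) * f t

/-- `h ∈ C₀(1/ω_k)`: `h` is continuous on `ℝ⁺` and `h/ω_k` is bounded and vanishes
at infinity. -/
def MemC0w (ω : ℕ → ℝ → ℝ) (k : ℕ) (h : ℝ → ℂ) : Prop :=
  ContinuousOn h (Ici 0) ∧ (∃ D : ℝ, ∀ t ∈ Ici (0 : ℝ), ‖h t‖ ≤ D * ω k t) ∧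
    Tendsto (fun t => ‖h t‖ / ω k t) atTop (nhds 0)

/-- `ρ` represents the measure `(Xν) * μ` (with `μ, ν ∈ B(ω)` encoded by `σ, τ`):
for any `n`, any `m, C` with `t ωₙ(t) ≤ C ω_m(t)` on `ℝ⁺`, and any bounded Borel set
`E`, `(ωₙ · ρ)(E) = ∫∫ 1_E(t+s) ωₙ(t+s) t dμ(s) dν(t)`. -/
def IsXConvBW (ω : ℕ → ℝ → ℝ) (σ τ σρ : ℕ → ComplexMeasure ℝ) : Prop :=
  ∀ (n m : ℕ) (C : ℝ), (∀ t ∈ Ici (0 : ℝ), t * ω n t ≤ C * ω m t) →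
    ∀ E : Set ℝ, MeasurableSet E → Bornology.IsBounded E →
      σρ n E = cInt (τ m) fun t => ((t / ω m t : ℝ) : ℂ) *
        cInt (σ n) fun s =>
          E.indicator (fun u => ((ω n u : ℝ) : ℂ)) (t + s) / ((ω n s : ℝ) : ℂ)

section ComplexIntegral

variable {X : Type} [MeasurableSpace X]

def jordanParts (μ : ComplexMeasure X) : Fin 4 → Measure X :=
  ![μ.re.toJordanDecomposition.posPart, μ.re.toJordanDecomposition.negPart,
    μ.im.toJordanDecomposition.posPart, μ.im.toJordanDecomposition.negPart]

def jordanCoeff : Fin 4 → ℂ := ![1, -1, Complex.I, -Complex.I]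

instance (μ : ComplexMeasure X) (j : Fin 4) : IsFiniteMeasure (jordanParts μ j) := by
  fin_cases j <;> simp [jordanParts] <;> infer_instance

lemma norm_jordanCoeff (j : Fin 4) : ‖jordanCoeff j‖ = 1 := by
  fin_cases j <;> simp [jordanCoeff]

lemma cInt_eq_sum (μ : ComplexMeasure X) (f : X → ℂ) :
    cInt μ f = ∑ j, jordanCoeff j * ∫ x, f x ∂jordanParts μ j := by
  simp only [cInt, jordanCoeff, jordanParts, Fin.sum_univ_four, Matrix.cons_val_zero,
    Matrix.cons_val_one, Matrix.cons_val, one_mul, neg_mul]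
  ring

def cMass (μ : ComplexMeasure X) : ℝ := ∑ j, (jordanParts μ j univ).toReal

lemma cMass_nonneg (μ : ComplexMeasure X) : 0 ≤ cMass μ :=
  Finset.sum_nonneg fun _ _ => ENNReal.toReal_nonneg

lemma norm_cInt_le (μ : ComplexMeasure X) {f : X → ℂ} {B : ℝ} (hB : ∀ x, ‖f x‖ ≤ B) :
    ‖cInt μ f‖ ≤ B * cMass μ := by
  rw [cInt_eq_sum, cMass, Finset.mul_sum]
  refine (norm_sum_le _ _).trans (Finset.sum_le_sum fun j _ => ?_)
  rw [norm_mul, norm_jordanCoeff, one_mul]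
  exact norm_integral_le_of_norm_le_const (.of_forall hB)

lemma cInt_const_mul (μ : ComplexMeasure X) (c : ℂ) (f : X → ℂ) :
    cInt μ (fun x => c * f x) = c * cInt μ f := by
  simp only [cInt_eq_sum, integral_const_mul, Finset.mul_sum]
  exact Finset.sum_congr rfl fun j _ => mul_left_comm _ _ _

lemma cInt_add (μ : ComplexMeasure X) {f g : X → ℂ} (hf : Measurable f) (hg : Measurable g)
    {Bf Bg : ℝ} (hfB : ∀ x, ‖f x‖ ≤ Bf) (hgB : ∀ x, ‖g x‖ ≤ Bg) :
    cInt μ (f + g) = cInt μ f + cInt μ g := by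
  have hint {φ : X → ℂ} (hφ : Measurable φ) {B : ℝ} (hφB : ∀ x, ‖φ x‖ ≤ B) (j : Fin 4) :
      Integrable φ (jordanParts μ j) :=
    .of_bound hφ.aestronglyMeasurable B (.of_forall hφB)
  simp only [cInt_eq_sum, Pi.add_apply, ← Finset.sum_add_distrib, ← mul_add]
  exact Finset.sum_congr rfl fun j _ => by rw [integral_add (hint hf hfB j) (hint hg hgB j)]

lemma cInt_indicator_const (μ : ComplexMeasure X) {E : Set X} (hE : MeasurableSet E) (c : ℂ) :
    cInt μ (E.indicator fun _ => c) = c * μ E := by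
  have hpart (s : SignedMeasure X) :
      (∫ x, E.indicator (fun _ => c) x ∂s.toJordanDecomposition.posPart) -
        ∫ x, E.indicator (fun _ => c) x ∂s.toJordanDecomposition.negPart = s E * c := by
    rw [integral_indicator_const _ hE, integral_indicator_const _ hE,
      SignedMeasure.apply_eq_posPart_real_sub_negPart_real s hE]
    simp only [Complex.real_smul, Complex.ofReal_sub]
    ring
  rw [cInt, hpart, hpart]
  conv_rhs => rw [← Complex.re_add_im (μ E)]
  change ((μ E).re : ℂ) * c + Complex.I * ((μ E).im * c) = _
  ring

lemma jordanDecomposition_null_of_forall_subset (s : SignedMeasure X) {N : Set X}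
    (hN : MeasurableSet N) (hs : ∀ E, MeasurableSet E → E ⊆ N → s E = 0) :
    s.toJordanDecomposition.posPart N = 0 ∧ s.toJordanDecomposition.negPart N = 0 := by
  obtain ⟨i, hi, hpos_i, hneg_i, hpos, hneg⟩ := s.toJordanDecomposition_spec
  rw [hpos, hneg, SignedMeasure.toMeasureOfZeroLE_apply _ hpos_i hi hN,
    SignedMeasure.toMeasureOfLEZero_apply _ hneg_i hi.compl hN]
  simp [hs _ (hi.inter hN) inter_subset_right, hs _ (hi.compl.inter hN) inter_subset_right]

lemma jordanParts_null_of_concOn {μ : ComplexMeasure X} {A : Set X} (hA : MeasurableSet A)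
    (hμ : ConcOn μ A) (j : Fin 4) : jordanParts μ j Aᶜ = 0 := by
  have hre := jordanDecomposition_null_of_forall_subset μ.re hA.compl fun E hE hEA => by
    change (μ E).re = 0
    simp [hμ E hE hEA]
  have him := jordanDecomposition_null_of_forall_subset μ.im hA.compl fun E hE hEA => by
    change (μ E).im = 0
    simp [hμ E hE hEA]
  fin_cases j
  exacts [hre.1, hre.2, him.1, him.2]

lemma cInt_congr {μ : ComplexMeasure X} {A : Set X} (hA : MeasurableSet A) (hμ : ConcOn μ A)
    {f g : X → ℂ} (hfg : EqOn f g A) : cInt μ f = cInt μ g := by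
  simp only [cInt_eq_sum]
  refine Finset.sum_congr rfl fun j _ => congrArg _ (integral_congr_ae ?_)
  exact measure_mono_null (fun x hx hxA => hx (hfg hxA))
    (jordanParts_null_of_concOn hA hμ j)

lemma norm_cInt_le_of_concOn {μ : ComplexMeasure X} {A : Set X} (hA : MeasurableSet A)
    (hμ : ConcOn μ A) {f : X → ℂ} {B : ℝ} (hB0 : 0 ≤ B) (hB : ∀ x ∈ A, ‖f x‖ ≤ B) :
    ‖cInt μ f‖ ≤ B * cMass μ := by
  classical
  rw [cInt_congr hA hμ (g := A.indicator f) fun x hx => (indicator_of_mem hx f).symm]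
  refine norm_cInt_le μ fun x => ?_
  by_cases hx : x ∈ A
  · rw [indicator_of_mem hx]; exact hB x hx
  · rw [indicator_of_notMem hx, norm_zero]; exact hB0

lemma measurable_cInt {Y : Type} [MeasurableSpace Y] (μ : ComplexMeasure X) {G : Y → X → ℂ}
    (hG : Measurable (Function.uncurry G)) : Measurable fun y => cInt μ (G y) := by
  simp only [cInt_eq_sum]
  exact Finset.measurable_sum _ fun j _ => measurable_const.mul
    (hG.stronglyMeasurable.integral_prod_right' (ν := jordanParts μ j)).measurable

lemma tendsto_cInt_of_dominated (μ : ComplexMeasure X) {ι : Type} {l : Filter ι}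
    [l.IsCountablyGenerated] {F : ι → X → ℂ} {f : X → ℂ} {B : ℝ}
    (hF : ∀ᶠ i in l, Measurable (F i)) (hFB : ∀ᶠ i in l, ∀ x, ‖F i x‖ ≤ B)
    (hlim : ∀ x, Tendsto (fun i => F i x) l (𝓝 (f x))) :
    Tendsto (fun i => cInt μ (F i)) l (𝓝 (cInt μ f)) := by
  simp only [cInt_eq_sum]
  refine tendsto_finsetSum _ fun j _ => .const_mul _ ?_
  exact tendsto_integral_filter_of_dominated_convergence (fun _ => B)
    (hF.mono fun _ h => h.aestronglyMeasurable) (hFB.mono fun _ h => .of_forall h)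
    (integrable_const B) (.of_forall hlim)

end ComplexIntegral

section IteratedIntegral

variable {X Y : Type} [MeasurableSpace X] [MeasurableSpace Y]

lemma cInt_cInt_add (τ : ComplexMeasure X) (σ : ComplexMeasure Y) {G H : X → Y → ℂ}
    (hG : Measurable (Function.uncurry G)) (hH : Measurable (Function.uncurry H)) {BG BH : ℝ}
    (hGB : ∀ t s, ‖G t s‖ ≤ BG) (hHB : ∀ t s, ‖H t s‖ ≤ BH) :
    (cInt τ fun t => cInt σ (G t + H t)) =
      (cInt τ fun t => cInt σ (G t)) + cInt τ fun t => cInt σ (H t) := by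
  have hinner : (fun t => cInt σ (G t + H t)) = (fun t => cInt σ (G t)) + fun t => cInt σ (H t) :=
    funext fun t => cInt_add σ hG.of_uncurry_left hH.of_uncurry_left (hGB t) (hHB t)
  rw [hinner]
  exact cInt_add τ (measurable_cInt σ hG) (measurable_cInt σ hH)
    (fun t => norm_cInt_le σ (hGB t)) (fun t => norm_cInt_le σ (hHB t))

lemma tendsto_cInt_cInt (τ : ComplexMeasure X) (σ : ComplexMeasure Y) {ι : Type} {l : Filter ι}
    [l.IsCountablyGenerated] {F : ι → X → Y → ℂ} {G : X → Y → ℂ} {B : ℝ}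
    (hF : ∀ i, Measurable (Function.uncurry (F i))) (hFB : ∀ i t s, ‖F i t s‖ ≤ B)
    (hlim : ∀ t s, Tendsto (fun i => F i t s) l (𝓝 (G t s))) :
    Tendsto (fun i => cInt τ fun t => cInt σ (F i t)) l (𝓝 (cInt τ fun t => cInt σ (G t))) :=
  tendsto_cInt_of_dominated τ (.of_forall fun i => measurable_cInt σ (hF i))
    (.of_forall fun i t => norm_cInt_le σ (hFB i t))
    fun t => tendsto_cInt_of_dominated σ (.of_forall fun i => (hF i).of_uncurry_left)
      (.of_forall fun i => hFB i t) (hlim t)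

end IteratedIntegral

lemma MeasureTheory.SimpleFunc.exists_forall_norm_indicator_le {α F : Type*} [MeasurableSpace α]
    [NormedAddCommGroup F] (φ : SimpleFunc α F) (E : Set α) : ∃ B, ∀ x, ‖E.indicator φ x‖ ≤ B :=
  let ⟨B, hB⟩ := φ.exists_forall_norm_le
  ⟨B, fun x => (norm_indicator_le_norm_self φ x).trans (hB x)⟩

theorem boundedMeasurable_induction {P : (ℝ → ℂ) → Prop}
    (indicator : ∀ (c : ℂ) {E : Set ℝ}, MeasurableSet E → Bornology.IsBounded E →
      P (E.indicator fun _ => c))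
    (add : ∀ ⦃f g : ℝ → ℂ⦄, Measurable f → Measurable g → (∃ B, ∀ x, ‖f x‖ ≤ B) →
      (∃ B, ∀ x, ‖g x‖ ≤ B) → P f → P g → P (f + g))
    (lim : ∀ ⦃F : ℕ → ℝ → ℂ⦄ ⦃f : ℝ → ℂ⦄ ⦃B : ℝ⦄, (∀ n, Measurable (F n)) →
      (∀ n x, ‖F n x‖ ≤ B) → (∀ x, Tendsto (fun n => F n x) atTop (𝓝 (f x))) →
      (∀ n, P (F n)) → P f)
    {f : ℝ → ℂ} (hf : Measurable f) {B : ℝ} (hfB : ∀ x, ‖f x‖ ≤ B) : P f := by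
  classical
  have hsimple (n : ℕ) (φ : SimpleFunc ℝ ℂ) : P ((Icc (-n : ℝ) n).indicator φ) := by
    induction φ using SimpleFunc.induction with
    | const c hs =>
      rw [SimpleFunc.const_zero, SimpleFunc.coe_piecewise, SimpleFunc.coe_zero,
        piecewise_eq_indicator, SimpleFunc.coe_const, indicator_indicator]
      exact indicator c (measurableSet_Icc.inter hs)
        ((Metric.isBounded_Icc _ _).subset inter_subset_left)
    | @add φ ψ _ hφ hψ =>
      rw [SimpleFunc.coe_add, indicator_add']
      exact add (φ.measurable.indicator measurableSet_Icc)
        (ψ.measurable.indicator measurableSet_Icc) (φ.exists_forall_norm_indicator_le _)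
        (ψ.exists_forall_norm_indicator_le _) hφ hψ
  have hB : 0 ≤ B := (norm_nonneg _).trans (hfB 0)
  set φ := hf.stronglyMeasurable.approxBounded B
  refine lim (fun n => (φ n).measurable.indicator measurableSet_Icc)
    (fun n x => (norm_indicator_le_norm_self _ x).trans
      (hf.stronglyMeasurable.norm_approxBounded_le hB n x))
    (fun x => ?_) fun n => hsimple n (φ n)
  refine (hf.stronglyMeasurable.tendsto_approxBounded_of_norm_le (hfB x)).congr' ?_
  filter_upwards [eventually_ge_atTop ⌈|x|⌉₊] with n hn
  have hx : |x| ≤ n := (Nat.le_ceil _).trans (by exact_mod_cast hn)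
  exact (indicator_of_mem (mem_Icc.2 (abs_le.1 hx)) _).symm

lemma ContinuousOn.measurable_indicator {α γ : Type*} [TopologicalSpace α] [MeasurableSpace α]
    [OpensMeasurableSpace α] [TopologicalSpace γ] [MeasurableSpace γ] [BorelSpace γ] [Zero γ]
    {f : α → γ} {s : Set α} (hf : ContinuousOn f s) (hs : MeasurableSet s) :
    Measurable (s.indicator f) := by
  classical
  rw [← piecewise_eq_indicator]
  exact hf.measurable_piecewise continuousOn_const hs

section Weights

variable {w v : ℝ → ℝ}

lemma IsAlgebraWeight.shift_div_le (hw : IsAlgebraWeight w) {t s : ℝ} (ht : 0 ≤ t) (hs : 0 ≤ s) :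
    w (t + s) / w s ≤ w t := by
  rw [div_le_iff₀ (hw.2.1 s hs)]
  exact hw.2.2.2.2.1 t ht s hs

lemma IsAlgebraWeight.norm_shift_div_le (hw : IsAlgebraWeight w) {h : ℝ → ℂ} {A t s : ℝ}
    (hA : 0 ≤ A) (ht : 0 ≤ t) (hs : 0 ≤ s) (hh : ‖h (t + s)‖ ≤ A * w (t + s)) :
    ‖h (t + s) / (w s : ℂ)‖ ≤ A * w t := by
  rw [norm_div, Complex.norm_real, Real.norm_of_nonneg (hw.2.1 s hs).le]
  calc ‖h (t + s)‖ / w s ≤ A * (w (t + s) / w s) := by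
        rw [mul_div_assoc']
        gcongr
        exact (hw.2.1 s hs).le
    _ ≤ A * w t := by gcongr; exact hw.shift_div_le ht hs

lemma IsAlgebraWeight.nonneg_of_norm_le (hw : IsAlgebraWeight w) {h : ℝ → ℂ} {D : ℝ}
    (hD : ∀ t ∈ Ici (0 : ℝ), ‖h t‖ ≤ D * w t) : 0 ≤ D :=
  nonneg_of_mul_nonneg_left ((norm_nonneg _).trans (hD 0 self_mem_Ici)) (hw.2.1 0 self_mem_Ici)

/-- The predual operator `(T_μ h)(t) = t ∫ h(t+s) dμ(s)`, with `μ = w⁻¹ · σ`. -/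
def tmu (σ : ComplexMeasure ℝ) (w : ℝ → ℝ) (h : ℝ → ℂ) (t : ℝ) : ℂ :=
  (t : ℂ) * cInt σ fun s => h (t + s) / ((w s : ℝ) : ℂ)

/-- The measure `t dν(t) dμ(s)` written against `v · ν` and `w · μ`, times the weight `w (t + s)`
of `w · ((Xν) * μ)`. -/
def xKernel (w v : ℝ → ℝ) (t s : ℝ) : ℂ :=
  if 0 ≤ t ∧ 0 ≤ s then ((t / v t * (w (t + s) / w s) : ℝ) : ℂ) else 0

lemma measurable_xKernel (hw : Measurable w) (hv : Measurable v) :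
    Measurable (Function.uncurry (xKernel w v)) := by
  refine Measurable.ite ((measurableSet_Ici.preimage measurable_fst).inter
    (measurableSet_Ici.preimage measurable_snd)) (Complex.measurable_ofReal.comp ?_)
    measurable_const
  exact (measurable_fst.div (hv.comp measurable_fst)).mul
    ((hw.comp (measurable_fst.add measurable_snd)).div (hw.comp measurable_snd))

lemma norm_xKernel_le (hw : IsAlgebraWeight w) (hv : ∀ t ∈ Ici (0 : ℝ), 0 < v t) {C : ℝ}
    (hC : ∀ t ∈ Ici (0 : ℝ), t * w t ≤ C * v t) (t s : ℝ) : ‖xKernel w v t s‖ ≤ |C| := by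
  unfold xKernel
  split_ifs with hts
  · obtain ⟨ht, hs⟩ := hts
    have hvt := hv t ht
    have hratio : 0 ≤ w (t + s) / w s :=
      div_nonneg (hw.2.1 _ (add_nonneg ht hs)).le (hw.2.1 s hs).le
    rw [Complex.norm_real, Real.norm_of_nonneg (by positivity)]
    calc t / v t * (w (t + s) / w s) ≤ t / v t * w t := by
          gcongr; exact hw.shift_div_le ht hs
      _ = t * w t / v t := by ring
      _ ≤ C := by rw [div_le_iff₀ hvt]; exact hC t ht
      _ ≤ |C| := le_abs_self C
  · simp

lemma cInt_eq_cInt_xKernel {σ τ ρ : ComplexMeasure ℝ} (hσ : ConcOn σ (Ici 0))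
    (hτ : ConcOn τ (Ici 0)) (hw : IsAlgebraWeight w) (hv_meas : Measurable v)
    (hv_pos : ∀ t ∈ Ici (0 : ℝ), 0 < v t) {C : ℝ} (hC : ∀ t ∈ Ici (0 : ℝ), t * w t ≤ C * v t)
    (hρ : ∀ E : Set ℝ, MeasurableSet E → Bornology.IsBounded E →
      ρ E = cInt τ fun t => ((t / v t : ℝ) : ℂ) *
        cInt σ fun s => E.indicator (fun u => ((w u : ℝ) : ℂ)) (t + s) / ((w s : ℝ) : ℂ))
    {f : ℝ → ℂ} (hf : Measurable f) {B : ℝ} (hfB : ∀ x, ‖f x‖ ≤ B) :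
    cInt ρ f = cInt τ fun t => cInt σ fun s => xKernel w v t s * f (t + s) := by
  have hK := measurable_xKernel hw.1 hv_meas
  have hKB := norm_xKernel_le hw hv_pos hC
  have hjoint {g : ℝ → ℂ} (hg : Measurable g) :
      Measurable (Function.uncurry fun t s => xKernel w v t s * g (t + s)) :=
    hK.mul (hg.comp measurable_add)
  have hjointB {g : ℝ → ℂ} {Bg : ℝ} (hgB : ∀ x, ‖g x‖ ≤ Bg) (t s : ℝ) :
      ‖xKernel w v t s * g (t + s)‖ ≤ |C| * Bg :=
    (norm_mul_le _ _).trans (mul_le_mul (hKB t s) (hgB _) (norm_nonneg _) (abs_nonneg C))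
  refine boundedMeasurable_induction
    (P := fun f => cInt ρ f = cInt τ fun t => cInt σ fun s => xKernel w v t s * f (t + s))
    (fun c E hE hEb => ?_) (fun f g hf hg hfB hgB hf' hg' => ?_)
    (fun F f B hF hFB hlim hF' => ?_) hf hfB
  · rw [cInt_indicator_const ρ hE, hρ E hE hEb, ← cInt_const_mul]
    refine cInt_congr measurableSet_Ici hτ fun t (ht : 0 ≤ t) => ?_
    simp only [← mul_assoc, ← cInt_const_mul]
    refine cInt_congr measurableSet_Ici hσ fun s (hs : 0 ≤ s) => ?_
    simp only [xKernel, if_pos (And.intro ht hs)]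
    by_cases hts : t + s ∈ E
    · simp only [indicator_of_mem hts]
      push_cast
      ring
    · simp [indicator_of_notMem hts]
  · obtain ⟨Bf, hBf⟩ := hfB
    obtain ⟨Bg, hBg⟩ := hgB
    rw [cInt_add ρ hf hg hBf hBg, hf', hg', ← cInt_cInt_add τ σ (hjoint hf) (hjoint hg)
      (hjointB hBf) (hjointB hBg)]
    simp only [Pi.add_apply, mul_add]
    rfl
  · refine tendsto_nhds_unique
      (tendsto_cInt_of_dominated ρ (.of_forall hF) (.of_forall hFB) hlim) ?_
    simp only [hF']
    exact tendsto_cInt_cInt τ σ (fun n => hjoint (hF n)) (fun n => hjointB (hFB n))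
      fun t s => (hlim _).const_mul _

lemma cInt_div_weight_eq_cInt_tmu {σ τ ρ : ComplexMeasure ℝ} (hσ : ConcOn σ (Ici 0))
    (hτ : ConcOn τ (Ici 0)) (hρc : ConcOn ρ (Ici 0)) (hw : IsAlgebraWeight w)
    (hv_meas : Measurable v) (hv_pos : ∀ t ∈ Ici (0 : ℝ), 0 < v t) {C : ℝ}
    (hC : ∀ t ∈ Ici (0 : ℝ), t * w t ≤ C * v t)
    (hρ : ∀ E : Set ℝ, MeasurableSet E → Bornology.IsBounded E →
      ρ E = cInt τ fun t => ((t / v t : ℝ) : ℂ) *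
        cInt σ fun s => E.indicator (fun u => ((w u : ℝ) : ℂ)) (t + s) / ((w s : ℝ) : ℂ))
    {h : ℝ → ℂ} (hh : ContinuousOn h (Ici 0)) {D : ℝ}
    (hD : ∀ t ∈ Ici (0 : ℝ), ‖h t‖ ≤ D * w t) :
    (cInt ρ fun t => h t / ((w t : ℝ) : ℂ)) =
      cInt τ fun t => tmu σ w h t / ((v t : ℝ) : ℂ) := by
  set H := (Ici (0 : ℝ)).indicator h with hH_def
  have hHw_meas : Measurable fun u => H u / ((w u : ℝ) : ℂ) :=
    (hh.measurable_indicator measurableSet_Ici).div (Complex.measurable_ofReal.comp hw.1)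
  have hHw_bdd : ∀ u, ‖H u / ((w u : ℝ) : ℂ)‖ ≤ D := by
    intro u
    by_cases hu : u ∈ Ici (0 : ℝ)
    · rw [hH_def, indicator_of_mem hu, norm_div, Complex.norm_real,
        Real.norm_of_nonneg (hw.2.1 u hu).le, div_le_iff₀ (hw.2.1 u hu)]
      exact hD u hu
    · simpa [hH_def, indicator_of_notMem hu] using hw.nonneg_of_norm_le hD
  rw [cInt_congr measurableSet_Ici hρc (g := fun u => H u / ((w u : ℝ) : ℂ))
      fun u hu => by simp only [hH_def, indicator_of_mem hu],
    cInt_eq_cInt_xKernel hσ hτ hw hv_meas hv_pos hC hρ hHw_meas hHw_bdd]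
  refine cInt_congr measurableSet_Ici hτ fun t (ht : 0 ≤ t) => ?_
  rw [tmu, mul_div_right_comm, ← cInt_const_mul]
  refine cInt_congr measurableSet_Ici hσ fun s (hs : 0 ≤ s) => ?_
  have hts : 0 ≤ t + s := add_nonneg ht hs
  have hwts : ((w (t + s) : ℝ) : ℂ) ≠ 0 := Complex.ofReal_ne_zero.2 (hw.2.1 _ hts).ne'
  simp only [xKernel, if_pos (And.intro ht hs), hH_def, indicator_of_mem (mem_Ici.2 hts)]
  push_cast
  field_simp

lemma norm_tmu_le {σ : ComplexMeasure ℝ} (hσ : ConcOn σ (Ici 0)) (hw : IsAlgebraWeight w)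
    {C : ℝ} (hC : ∀ t ∈ Ici (0 : ℝ), t * w t ≤ C * v t)
    {h : ℝ → ℂ} {A t : ℝ} (hA : 0 ≤ A) (ht : 0 ≤ t) (hh : ∀ u, t ≤ u → ‖h u‖ ≤ A * w u) :
    ‖tmu σ w h t‖ ≤ C * A * cMass σ * v t := by
  have hint : ‖cInt σ fun s => h (t + s) / ((w s : ℝ) : ℂ)‖ ≤ A * w t * cMass σ :=
    norm_cInt_le_of_concOn measurableSet_Ici hσ (mul_nonneg hA (hw.2.1 t ht).le)
      fun s (hs : 0 ≤ s) => hw.norm_shift_div_le hA ht hs (hh _ (le_add_of_nonneg_right hs))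
  have hAσ : 0 ≤ A * cMass σ := mul_nonneg hA (cMass_nonneg σ)
  rw [tmu, norm_mul, Complex.norm_real, Real.norm_of_nonneg ht]
  calc t * ‖cInt σ fun s => h (t + s) / ((w s : ℝ) : ℂ)‖ ≤ t * (A * w t * cMass σ) := by
        gcongr
    _ = t * w t * (A * cMass σ) := by ring
    _ ≤ C * v t * (A * cMass σ) := mul_le_mul_of_nonneg_right (hC t ht) hAσ
    _ = C * A * cMass σ * v t := by ring

lemma continuousOn_tmu {σ : ComplexMeasure ℝ} (hσ : ConcOn σ (Ici 0)) (hw : IsAlgebraWeight w)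
    {h : ℝ → ℂ} (hh : ContinuousOn h (Ici 0)) {D : ℝ}
    (hD : ∀ t ∈ Ici (0 : ℝ), ‖h t‖ ≤ D * w t) : ContinuousOn (tmu σ w h) (Ici 0) := by
  set H := (Ici (0 : ℝ)).indicator h with hH_def
  have hH : Measurable H := hh.measurable_indicator measurableSet_Ici
  set G : ℝ → ℝ → ℂ := fun t => (Ici 0).indicator fun s => H (t + s) / ((w s : ℝ) : ℂ)
    with hG_def
  have htmu : ∀ t ∈ Ici (0 : ℝ), tmu σ w h t = t * cInt σ (G t) := fun t (ht : 0 ≤ t) => by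
    refine congrArg _ (cInt_congr measurableSet_Ici hσ fun s (hs : 0 ≤ s) => ?_)
    simp only [hG_def, hH_def, indicator_of_mem (mem_Ici.2 hs),
      indicator_of_mem (mem_Ici.2 (add_nonneg ht hs))]
  have hGcont : ContinuousOn (fun t => cInt σ (G t)) (Ici 0) := by
    intro t₀ (ht₀ : 0 ≤ t₀)
    obtain ⟨W, hW⟩ := hw.2.2.1 (t₀ + 1)
    have hnear : ∀ᶠ t in 𝓝[Ici 0] t₀, t ∈ Icc 0 (t₀ + 1) := by
      filter_upwards [self_mem_nhdsWithin,
        mem_nhdsWithin_of_mem_nhds (Iic_mem_nhds (lt_add_one t₀))] with t h₁ h₂ using ⟨h₁, h₂⟩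
    have hD0 := hw.nonneg_of_norm_le hD
    refine tendsto_cInt_of_dominated σ (B := D * W) (.of_forall fun t => ?_) ?_ fun s => ?_
    · exact ((hH.comp (measurable_const.add measurable_id)).div
        (Complex.measurable_ofReal.comp hw.1)).indicator measurableSet_Ici
    · filter_upwards [hnear] with t ht s
      by_cases hs : s ∈ Ici (0 : ℝ)
      · simp only [hG_def, hH_def, indicator_of_mem hs,
          indicator_of_mem (mem_Ici.2 (add_nonneg ht.1 hs))]
        exact (hw.norm_shift_div_le hD0 ht.1 hs (hD _ (add_nonneg ht.1 hs))).trans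
          (mul_le_mul_of_nonneg_left (hW t ht).1 hD0)
      · simp only [hG_def, indicator_of_notMem hs, norm_zero]
        exact mul_nonneg hD0 ((hw.2.1 0 self_mem_Ici).le.trans
          (hW 0 ⟨le_rfl, by linarith⟩).1)
    · by_cases hs : s ∈ Ici (0 : ℝ)
      · simp only [hG_def, indicator_of_mem hs]
        refine ContinuousWithinAt.div_const ?_ _
        have hcomp : ContinuousWithinAt (fun t => h (t + s)) (Ici 0) t₀ :=
          ContinuousWithinAt.comp (f := fun t => t + s) (hh _ (add_nonneg ht₀ hs))
            (continuous_add_const s).continuousWithinAt fun t (ht : 0 ≤ t) => add_nonneg ht hs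
        refine hcomp.congr (fun t (ht : 0 ≤ t) => ?_) ?_
        · simp only [hH_def, indicator_of_mem (mem_Ici.2 (add_nonneg ht hs))]
        · simp only [hH_def, indicator_of_mem (mem_Ici.2 (add_nonneg ht₀ hs))]
      · simp only [hG_def, indicator_of_notMem hs]
        exact tendsto_const_nhds
  exact ((Complex.continuous_ofReal.continuousOn).mul hGcont).congr htmu

lemma tendsto_norm_tmu_div {σ : ComplexMeasure ℝ} (hσ : ConcOn σ (Ici 0))
    (hw : IsAlgebraWeight w) (hv : ∀ t ∈ Ici (0 : ℝ), 0 < v t) {C : ℝ}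
    (hC : ∀ t ∈ Ici (0 : ℝ), t * w t ≤ C * v t) {h : ℝ → ℂ}
    (hh : Tendsto (fun t => ‖h t‖ / w t) atTop (𝓝 0)) :
    Tendsto (fun t => ‖tmu σ w h t‖ / v t) atTop (𝓝 0) := by
  have hC0 : 0 ≤ C := by
    have := hC 1 (mem_Ici.2 zero_le_one)
    nlinarith [hw.2.1 1 (mem_Ici.2 zero_le_one), hv 1 (mem_Ici.2 zero_le_one)]
  set M := C * cMass σ
  have hM : 0 ≤ M := mul_nonneg hC0 (cMass_nonneg σ)
  rw [NormedAddGroup.tendsto_nhds_zero] at hh ⊢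
  intro ε hε
  obtain ⟨T, hT⟩ := eventually_atTop.1 (hh (ε / (M + 1)) (by positivity))
  filter_upwards [eventually_ge_atTop (max T 0)] with t ht
  have ht0 : 0 ≤ t := le_of_max_le_right ht
  have hbound := norm_tmu_le hσ hw hC (A := ε / (M + 1)) (by positivity) ht0 fun u hu => by
    have hu0 : 0 ≤ u := ht0.trans hu
    have := hT u ((le_of_max_le_left ht).trans hu)
    rw [Real.norm_of_nonneg (div_nonneg (norm_nonneg _) (hw.2.1 u hu0).le),
      div_lt_iff₀ (hw.2.1 u hu0)] at this
    exact this.le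
  rw [Real.norm_of_nonneg (div_nonneg (norm_nonneg _) (hv t ht0).le), div_lt_iff₀ (hv t ht0)]
  calc ‖tmu σ w h t‖ ≤ M * (ε / (M + 1)) * v t := by
        simpa only [M, mul_comm, mul_left_comm, mul_assoc] using hbound
    _ < ε * v t := by
        gcongr
        · exact hv t ht0
        · rw [mul_div_assoc', div_lt_iff₀ (by positivity)]
          nlinarith

lemma memC0w_tmu {ω : ℕ → ℝ → ℝ} {k m : ℕ} {σ : ComplexMeasure ℝ} (hσ : ConcOn σ (Ici 0))
    (hk : IsAlgebraWeight (ω k)) (hm : ∀ t ∈ Ici (0 : ℝ), 0 < ω m t) {C : ℝ}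
    (hC : ∀ t ∈ Ici (0 : ℝ), t * ω k t ≤ C * ω m t) {h : ℝ → ℂ} (hh : MemC0w ω k h) :
    MemC0w ω m (tmu σ (ω k) h) := by
  obtain ⟨hcont, ⟨D, hD⟩, hlim⟩ := hh
  exact ⟨continuousOn_tmu hσ hk hcont hD,
    ⟨C * D * cMass σ, fun t (ht : 0 ≤ t) => norm_tmu_le hσ hk hC (hk.nonneg_of_norm_le hD) ht
      fun u hu => hD u (ht.trans hu)⟩,
    tendsto_norm_tmu_div hσ hk hm hC hlim⟩

end Weights

/-- Let `(ωₙ)` be an increasing sequence of algebra weights with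
`∀ n ∃ m, sup_t t ωₙ(t)/ω_m(t) < ∞` and let `μ ∈ B(ω)`. Then `D̄_μ ν = (Xν) * μ` on
`B(ω)` is the adjoint of `T_μ` on `D(1/ω) = ⋃ₙ C₀(1/ωₙ)`,
`(T_μ h)(t) = t ∫ h(t+s) dμ(s)`: one has `∫ h d((Xν)*μ) = ∫ T_μ h dν` for all
`h ∈ D(1/ω)`, and consequently `D̄_μ` is weak-star continuous on `B(ω) = D(1/ω)*`
(continuous along every net converging weak-star against `D(1/ω)`). -/
theorem Dbar_BW_adjoint_and_weak_star_continuous (ω : ℕ → ℝ → ℝ)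
    (hω : IsWeightSeq ω)
    (hwc : ∀ n : ℕ, ∃ (m : ℕ) (C : ℝ), ∀ t ∈ Ici (0 : ℝ), t * ω n t ≤ C * ω m t)
    (σ : ℕ → ComplexMeasure ℝ) (hσ : MemBW ω σ) :
    -- the adjoint identity ⟨h, D̄_μ ν⟩ = ⟨T_μ h, ν⟩
    (∀ τ σρ : ℕ → ComplexMeasure ℝ, MemBW ω τ → MemBW ω σρ → IsXConvBW ω σ τ σρ →
      ∀ (k m : ℕ) (C : ℝ), (∀ t ∈ Ici (0 : ℝ), t * ω k t ≤ C * ω m t) →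
      ∀ h : ℝ → ℂ, MemC0w ω k h →
        (cInt (σρ k) fun t => h t / ((ω k t : ℝ) : ℂ)) =
          cInt (τ m) fun t =>
            ((t : ℂ) * cInt (σ k) fun s => h (t + s) / ((ω k s : ℝ) : ℂ)) /
              ((ω m t : ℝ) : ℂ)) ∧
    -- weak-star continuity of D̄_μ
    (∀ {ι : Type} (l : Filter ι)
        (τ : ι → ℕ → ComplexMeasure ℝ) (τ₀ : ℕ → ComplexMeasure ℝ)
        (σρ : ι → ℕ → ComplexMeasure ℝ) (σρ₀ : ℕ → ComplexMeasure ℝ),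
      (∀ i, MemBW ω (τ i)) → MemBW ω τ₀ →
      (∀ i, MemBW ω (σρ i)) → MemBW ω σρ₀ →
      (∀ i, IsXConvBW ω σ (τ i) (σρ i)) → IsXConvBW ω σ τ₀ σρ₀ →
      (∀ (k : ℕ) (h : ℝ → ℂ), MemC0w ω k h →
        Tendsto (fun i => cInt (τ i k) fun t => h t / ((ω k t : ℝ) : ℂ)) l
          (nhds (cInt (τ₀ k) fun t => h t / ((ω k t : ℝ) : ℂ)))) →
      ∀ (k : ℕ) (h : ℝ → ℂ), MemC0w ω k h →
        Tendsto (fun i => cInt (σρ i k) fun t => h t / ((ω k t : ℝ) : ℂ)) l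
          (nhds (cInt (σρ₀ k) fun t => h t / ((ω k t : ℝ) : ℂ)))) := by
  have hweight := hω.1
  have adjoint : ∀ τ σρ : ℕ → ComplexMeasure ℝ, MemBW ω τ → MemBW ω σρ → IsXConvBW ω σ τ σρ →
      ∀ (k m : ℕ) (C : ℝ), (∀ t ∈ Ici (0 : ℝ), t * ω k t ≤ C * ω m t) →
      ∀ h : ℝ → ℂ, MemC0w ω k h → (cInt (σρ k) fun t => h t / ((ω k t : ℝ) : ℂ)) =
        cInt (τ m) fun t => tmu (σ k) (ω k) h t / ((ω m t : ℝ) : ℂ) :=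
    fun τ σρ hτ hσρ hX k m C hC h ⟨hcont, ⟨_, hD⟩, _⟩ =>
      cInt_div_weight_eq_cInt_tmu (hσ.1 k) (hτ.1 m) (hσρ.1 k) (hweight k) (hweight m).1
        (hweight m).2.1 hC (hX k m C hC) hcont hD
  refine ⟨adjoint, fun l τ τ₀ σρ σρ₀ hτ hτ₀ hσρ hσρ₀ hX hX₀ hconv k h hh => ?_⟩
  obtain ⟨m, C, hC⟩ := hwc k
  simp only [adjoint _ _ (hτ _) (hσρ _) (hX _) k m C hC h hh,
    adjoint _ _ hτ₀ hσρ₀ hX₀ k m C hC h hh]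
  exact hconv m _ (memC0w_tmu (hσ.1 k) (hweight k) (hweight m).2.1 hC hh)
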